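/- Let q be a prime power, p ∈ F_q[x] irreducible, n ≥ 1, and R = F_q[x]/(pⁿ). Then every sequence over the multiplicative semigroup S_R of length D(U(S_R)) + n − 1 contains a nonempty subsequence whose product is an idempotent of R; consequently I(S_R) = D(U(S_R)) + n − 1. -/

import Mathlib

/-!
Every nonunit of `R = F[X]/(pⁿ)` is a multiple of `π = p mod pⁿ`, and `πⁿ = 0 ≠ πⁿ⁻¹`; in particular
`0` and `1` are the only idempotents of `R`. A sequence of length `D(Rˣ) + n - 1` contains either
`n` nonunits, whose product is divisible by `πⁿ = 0`, or `D(Rˣ)` units, which contain a nonempty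
product-one subsequence. Conversely, append `n - 1` copies of `π` to a product-one free sequence of
`D(Rˣ) - 1` units: every nonempty subproduct is `u πᵏ` with `u` a unit and `k < n`, so it is not
`0`, and it is `1` only if `k = 0` and `u` is a product-one subproduct of the units.
-/

/-- A sequence (multiset) over a commutative monoid is idempotent-product free if no nonempty
subsequence has an idempotent product. -/
def IdemProdFree {M : Type*} [CommMonoid M] (T : Multiset M) : Prop :=
  ∀ W ≤ T, W ≠ 0 → ¬ IsIdempotentElem W.prod

/-- The Erdős–Burgess constant of a commutative monoid. -/
noncomputable def ErdosBurgess (M : Type*) [CommMonoid M] : ℕ∞ :=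
  sInf {ℓ : ℕ∞ | ∀ T : Multiset M, ℓ ≤ (Multiset.card T : ℕ∞) → ¬ IdemProdFree T}

/-- The Davenport constant of a finite abelian group. -/
noncomputable def Davenport (G : Type*) [CommGroup G] : ℕ :=
  sInf {ℓ : ℕ | ∀ T : Multiset G, ℓ ≤ Multiset.card T →
    ∃ W ≤ T, W ≠ 0 ∧ W.prod = 1}

open Multiset

section Davenport

variable {G : Type*} [CommGroup G]

theorem exists_le_prod_eq_one_of_natCard_le [Finite G] (T : Multiset G)
    (hT : Nat.card G ≤ card T) : ∃ W ≤ T, W ≠ 0 ∧ W.prod = 1 := by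
  have := Fintype.ofFinite G
  obtain ⟨L, rfl⟩ : ∃ L : List G, (L : Multiset G) = T := ⟨T.toList, T.coe_toList⟩
  rw [coe_card] at hT
  obtain ⟨i, j, hne, hij⟩ := Fintype.exists_ne_map_eq_of_card_lt
    (fun i : Fin (Nat.card G + 1) => (L.take i).prod) (by simp [Nat.card_eq_fintype_card])
  wlog hlt : (i : ℕ) < j generalizing i j
  · exact this j i hne.symm hij.symm (by omega)
  refine ⟨((L.take j).drop i : List G), coe_le.mpr
    ((List.drop_sublist _ _).trans (List.take_sublist _ _)).subperm, ?_, ?_⟩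
  · rw [Ne, coe_eq_zero, ← List.length_eq_zero_iff, List.length_drop, List.length_take]
    omega
  · have hsplit := List.prod_take_mul_prod_drop (L.take j) i
    rw [List.take_take, min_eq_left hlt.le] at hsplit
    simpa using mul_left_cancel (hsplit.trans (hij.symm.trans (mul_one _).symm))

theorem exists_le_prod_eq_one_of_davenport_le [Finite G] {T : Multiset G}
    (hT : Davenport G ≤ card T) : ∃ W ≤ T, W ≠ 0 ∧ W.prod = 1 :=
  Nat.sInf_mem (s := {ℓ | ∀ T : Multiset G, ℓ ≤ card T → ∃ W ≤ T, W ≠ 0 ∧ W.prod = 1})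
    ⟨Nat.card G, exists_le_prod_eq_one_of_natCard_le⟩ T hT

theorem exists_davenport_le_card_add_one :
    ∃ T : Multiset G, Davenport G ≤ card T + 1 ∧ ∀ W ≤ T, W ≠ 0 → W.prod ≠ 1 := by
  rcases Nat.eq_zero_or_pos (Davenport G) with h0 | hpos
  · exact ⟨0, by omega, fun W hW hW0 => absurd (le_zero.mp hW) hW0⟩
  · have := Nat.notMem_of_lt_sInf (Nat.sub_one_lt_of_lt hpos)
    simp only [Set.mem_ofPred_eq, not_forall, not_exists, not_and, exists_prop] at this
    obtain ⟨T, hT, hfree⟩ := this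
    exact ⟨T, by unfold Davenport; omega, hfree⟩

end Davenport

section Monoid

variable {M : Type*} [CommMonoid M]

theorem Units.prod_map_val (W : Multiset Mˣ) : (W.map (↑)).prod = (W.prod : M) :=
  (map_multiset_prod (Units.coeHom M) W).symm

theorem exists_le_prod_eq_one_of_forall_isUnit [Finite Mˣ] {T : Multiset M}
    (hT : ∀ x ∈ T, IsUnit x) (hcard : Davenport Mˣ ≤ card T) : ∃ W ≤ T, W ≠ 0 ∧ W.prod = 1 := by
  lift T to Multiset Mˣ using hT
  obtain ⟨W, hWT, hW0, hW1⟩ := exists_le_prod_eq_one_of_davenport_le (by simpa using hcard)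
  refine ⟨W.map (↑), map_le_map hWT, by simpa using hW0, ?_⟩
  rw [Units.prod_map_val, hW1, Units.val_one]

theorem erdosBurgess_le {N : ℕ}
    (h : ∀ T : Multiset M, N ≤ card T → ∃ W ≤ T, W ≠ 0 ∧ IsIdempotentElem W.prod) :
    ErdosBurgess M ≤ N :=
  sInf_le fun T hT hfree => by
    obtain ⟨W, hWT, hW0, hW⟩ := h T (by exact_mod_cast hT)
    exact hfree W hWT hW0 hW

theorem IdemProdFree.card_add_one_le_erdosBurgess {T : Multiset M} (hT : IdemProdFree T) :
    (card T + 1 : ℕ∞) ≤ ErdosBurgess M :=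
  le_sInf fun _ hℓ => Order.add_one_le_of_lt (lt_of_not_ge fun h => hℓ T h hT)

theorem exists_eq_map_add_replicate_of_le {a : M} (ha : ¬ IsUnit a) {S : Multiset Mˣ} {m : ℕ}
    {W : Multiset M} (hW : W ≤ S.map (↑) + replicate m a) :
    ∃ V ≤ S, ∃ k ≤ m, W = V.map (↑) + replicate k a := by
  classical
  have hS : ∀ x ∈ S.map ((↑) : Mˣ → M), IsUnit x := fun x hx => by
    obtain ⟨u, -, rfl⟩ := mem_map.mp hx
    exact u.isUnit
  have hrep : ∀ x ∈ replicate m a, ¬ IsUnit x := fun x hx => eq_of_mem_replicate hx ▸ ha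
  have hunits : W.filter IsUnit ≤ S.map (↑) := by
    simpa [filter_add, filter_eq_self.mpr hS, filter_eq_nil.mpr hrep] using
      filter_le_filter IsUnit hW
  have hnonunits : W.filter (¬ IsUnit ·) ≤ replicate m a := by
    simpa [filter_add, filter_eq_nil.mpr fun x hx => not_not.mpr (hS x hx),
      filter_eq_self.mpr hrep] using filter_le_filter (¬ IsUnit ·) hW
  lift W.filter IsUnit to Multiset Mˣ using fun x hx => (mem_filter.mp hx).2 with V hV
  rw [Multiset.map_le_map_iff Units.val_injective] at hunits
  obtain ⟨k, hk, hWk⟩ := le_replicate_iff.mp hnonunits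
  exact ⟨V, hunits, k, hk, by rw [hV, ← hWk, filter_add_not]⟩

end Monoid

section PrincipalMaximalIdeal

variable {R : Type*} [CommRing R] {π : R}

theorem eq_zero_or_eq_one_of_isIdempotentElem (hπ : ¬ IsUnit π)
    (hdvd : ∀ x : R, ¬ IsUnit x → π ∣ x) {e : R} (he : IsIdempotentElem e) : e = 0 ∨ e = 1 := by
  by_cases hu : IsUnit e
  · exact Or.inr ((IsIdempotentElem.iff_eq_one_of_isUnit hu).mp he)
  · have hu' : IsUnit (1 - e) := by
      by_contra h
      exact hπ (isUnit_of_dvd_one (by simpa using dvd_add (hdvd e hu) (hdvd _ h)))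
    exact Or.inl (hu'.mul_left_eq_zero.mp he.mul_one_sub_self)

theorem pow_card_dvd_prod_of_forall_not_isUnit (hdvd : ∀ x : R, ¬ IsUnit x → π ∣ x)
    {W : Multiset R} (hW : ∀ x ∈ W, ¬ IsUnit x) : π ^ card W ∣ W.prod := by
  simpa using prod_dvd_prod_of_dvd (fun _ => π) id fun x hx => hdvd x (hW x hx)

theorem exists_le_isIdempotentElem_prod [Finite Rˣ] (hdvd : ∀ x : R, ¬ IsUnit x → π ∣ x)
    {n : ℕ} (hn : 1 ≤ n) (hπn : π ^ n = 0) (T : Multiset R)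
    (hT : Davenport Rˣ + n - 1 ≤ card T) : ∃ W ≤ T, W ≠ 0 ∧ IsIdempotentElem W.prod := by
  classical
  by_cases hnonunits : n ≤ card (T.filter (¬ IsUnit ·))
  · refine ⟨T.filter (¬ IsUnit ·), filter_le _ _, ?_, ?_⟩
    · rintro h
      rw [h, card_zero] at hnonunits
      omega
    · have hprod := pow_card_dvd_prod_of_forall_not_isUnit (W := T.filter (¬ IsUnit ·)) hdvd
        fun x hx => (mem_filter.mp hx).2
      rw [pow_eq_zero_of_le hnonunits hπn, zero_dvd_iff] at hprod
      exact hprod ▸ .zero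
  · have hsplit := congrArg card (filter_add_not IsUnit T)
    rw [card_add] at hsplit
    obtain ⟨W, hWT, hW0, hW1⟩ := exists_le_prod_eq_one_of_forall_isUnit
      (T := T.filter IsUnit) (fun x hx => (mem_filter.mp hx).2) (by omega)
    exact ⟨W, hWT.trans (filter_le _ _), hW0, hW1 ▸ .one⟩

theorem idemProdFree_map_add_replicate (hdvd : ∀ x : R, ¬ IsUnit x → π ∣ x) {n : ℕ}
    (hπn : π ^ n = 0) (hπn' : π ^ (n - 1) ≠ 0) {S : Multiset Rˣ}
    (hS : ∀ V ≤ S, V ≠ 0 → V.prod ≠ 1) :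
    IdemProdFree (S.map (↑) + replicate (n - 1) π) := by
  have : Nontrivial R := nontrivial_of_ne _ _ hπn'
  have hπ : ¬ IsUnit π := IsNilpotent.not_isUnit ⟨n, hπn⟩
  intro W hW hW0 hidem
  obtain ⟨V, hVS, k, hk, rfl⟩ := exists_eq_map_add_replicate_of_le hπ hW
  rw [prod_add, Units.prod_map_val, prod_replicate] at hidem
  rcases eq_zero_or_eq_one_of_isIdempotentElem hπ hdvd hidem with h0 | h1
  · rw [Units.mul_right_eq_zero] at h0
    exact hπn' (pow_eq_zero_of_le hk h0)
  · obtain rfl : k = 0 := by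
      by_contra hk0
      exact hπ (isUnit_of_dvd_one (h1 ▸ (dvd_pow_self π hk0).mul_left _))
    refine hS V hVS (by rintro rfl; simp at hW0) ?_
    simpa [← Units.val_eq_one] using h1

end PrincipalMaximalIdeal

namespace Polynomial

variable {F : Type*} [Field F] {p : F[X]}

theorem finite_quotient_span_singleton [Finite F] (hp : p ≠ 0) :
    Finite (F[X] ⧸ Ideal.span {p}) :=
  have := (AdjoinRoot.powerBasis hp).finite
  Module.finite_of_finite (M := AdjoinRoot p) F

theorem dvd_of_not_isUnit_mk_span_pow (hp : Irreducible p) (n : ℕ)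
    (x : F[X] ⧸ Ideal.span {p ^ n}) (hx : ¬ IsUnit x) : Ideal.Quotient.mk _ p ∣ x := by
  obtain ⟨f, rfl⟩ := Ideal.Quotient.mk_surjective x
  by_cases hpf : p ∣ f
  · exact _root_.map_dvd _ hpf
  · obtain ⟨a, b, hab⟩ : IsCoprime (p ^ n) f := ((hp.coprime_iff_not_dvd).mpr hpf).pow_left
    refine absurd (IsUnit.of_mul_eq_one_right (Ideal.Quotient.mk _ b) ?_) hx
    simpa [Ideal.Quotient.mk_singleton_self] using
      congrArg (Ideal.Quotient.mk (Ideal.span {p ^ n})) hab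

theorem mk_pow_ne_zero_of_lt (hp : Irreducible p) {k n : ℕ} (hk : k < n) :
    Ideal.Quotient.mk (Ideal.span {p ^ n}) p ^ k ≠ 0 := by
  rw [← map_pow, Ne, Ideal.Quotient.eq_zero_iff_mem, Ideal.mem_span_singleton,
    pow_dvd_pow_iff hp.ne_zero hp.not_isUnit]
  omega

end Polynomial

/-- for R = F_q[x]/(pⁿ), every sequence of length D(U(R)) + n - 1 has a nonempty
subsequence with idempotent product, and I(S_R) = D(U(S_R)) + n - 1. -/
theorem erdosBurgess_prime_power
    (F : Type*) [Field F] [Fintype F]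
    (p : Polynomial F) (hirr : Irreducible p)
    (n : ℕ) (hn : 1 ≤ n) :
    (∀ T : Multiset (Polynomial F ⧸ Ideal.span {p ^ n}),
      Multiset.card T = Davenport (Polynomial F ⧸ Ideal.span {p ^ n})ˣ + n - 1 →
      ∃ W ≤ T, W ≠ 0 ∧ IsIdempotentElem W.prod) ∧
    ErdosBurgess (Polynomial F ⧸ Ideal.span {p ^ n}) =
      ((Davenport (Polynomial F ⧸ Ideal.span {p ^ n})ˣ + n - 1 : ℕ) : ℕ∞) := by
  have := Polynomial.finite_quotient_span_singleton (pow_ne_zero n hirr.ne_zero)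
  set π := Ideal.Quotient.mk (Ideal.span {p ^ n}) p
  have hdvd := Polynomial.dvd_of_not_isUnit_mk_span_pow hirr n
  have hπn : π ^ n = 0 := by rw [← map_pow, Ideal.Quotient.mk_singleton_self]
  have hπn' : π ^ (n - 1) ≠ 0 := Polynomial.mk_pow_ne_zero_of_lt hirr (by omega)
  have upper := exists_le_isIdempotentElem_prod hdvd hn hπn
  refine ⟨fun T hT => upper T hT.ge, le_antisymm (erdosBurgess_le upper) ?_⟩
  obtain ⟨S, hS, hSfree⟩ := exists_davenport_le_card_add_one
    (G := (Polynomial F ⧸ Ideal.span {p ^ n})ˣ)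
  have hfree := idemProdFree_map_add_replicate hdvd hπn hπn' hSfree
  refine le_trans ?_ hfree.card_add_one_le_erdosBurgess
  rw [card_add, card_map, card_replicate]
  exact_mod_cast (by omega)
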